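/- Inversion of translated tuple-type equality: if Γ satisfies the equational correspondence for the library bindings (in particular Γ ⊢ lib.Tuple =:= TupleDef where TupleDef is the recursive tuple record type), and Γ ⊢ lib.Tuple ∧ {T₁ = S₁} ∧ {T₂ = S₂} =:= lib.Tuple ∧ {T₁ = U₁} ∧ {T₂ = U₂}, then Γ ⊢ S₁ =:= U₁ and Γ ⊢ S₂ =:= U₂. -/
import Mathlib


namespace CDOT
/-! # A deep embedding of the cDOT calculus -/

set_option maxHeartbeats 1000000

/-- Paths: variables and chains of field selections. -/
inductive Path : Type
  | var : ℕ → Path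
  | sel : Path → ℕ → Path
deriving DecidableEq

/-- cDOT types. -/
inductive Ty : Type
  | top : Ty
  | bot : Ty
  | fld : ℕ → Ty → Ty            -- {a : T}
  | typ : ℕ → Ty → Ty → Ty       -- {A : S..T}
  | and : Ty → Ty → Ty           -- S ∧ T
  | mu : ℕ → Ty → Ty             -- μ(x : T)
  | all : ℕ → Ty → Ty → Ty       -- ∀(x : S) T
  | psel : Path → ℕ → Ty         -- p.A
  | sngl : Path → Ty             -- p.type
deriving DecidableEq

mutual
/-- cDOT terms (in A-normal form). -/
inductive Trm : Type
  | path : Path → Trm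
  | val : Val → Trm
  | app : Path → Path → Trm
  | lett : ℕ → Trm → Trm → Trm
  /-- `cas p q A y t₁ t₂` is `case p of q.A ⇒ y.t₁ else t₂`. -/
  | cas : Path → Path → ℕ → ℕ → Trm → Trm → Trm
/-- cDOT values: tagged objects ν(x:T)[q.A]d and lambdas. -/
inductive Val : Type
  | obj : Path → ℕ → ℕ → Ty → Dfs → Val     -- ν(x : T)[q.A] d
  | lam : ℕ → Ty → Trm → Val
/-- Object definitions: fields (initialized with stable terms, i.e. paths or
values) and type member definitions. -/
inductive Dfs : Type
  | fldP : ℕ → Path → Dfs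
  | fldV : ℕ → Val → Dfs
  | typ : ℕ → Ty → Dfs
  | and : Dfs → Dfs → Dfs
end

/-- Substituting a path for a variable in a path. -/
def Path.subst (x : ℕ) (p : Path) : Path → Path
  | .var y => if y = x then p else .var y
  | .sel q a => .sel (Path.subst x p q) a

/-- Substituting a path for a variable in a type. -/
def Ty.subst (x : ℕ) (p : Path) : Ty → Ty
  | .top => .top
  | .bot => .bot
  | .fld a T => .fld a (T.subst x p)
  | .typ A S T => .typ A (S.subst x p) (T.subst x p)
  | .and S T => .and (S.subst x p) (T.subst x p)
  | .mu y T => .mu y (if y = x then T else T.subst x p)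
  | .all y S T => .all y (S.subst x p) (if y = x then T else T.subst x p)
  | .psel q A => .psel (Path.subst x p q) A
  | .sngl q => .sngl (Path.subst x p q)

mutual
/-- Substituting a path for a variable in a term. -/
def Trm.subst (x : ℕ) (p : Path) : Trm → Trm
  | .path q => .path (Path.subst x p q)
  | .val v => .val (v.subst x p)
  | .app q r => .app (Path.subst x p q) (Path.subst x p r)
  | .lett y t u => .lett y (t.subst x p) (if y = x then u else u.subst x p)
  | .cas q r A y t u =>
      .cas (Path.subst x p q) (Path.subst x p r) A y (if y = x then t else t.subst x p) (u.subst x p)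
def Val.subst (x : ℕ) (p : Path) : Val → Val
  | .obj q A y T d =>
      .obj (Path.subst x p q) A y (if y = x then T else T.subst x p)
        (if y = x then d else d.subst x p)
  | .lam y T t => .lam y (T.subst x p) (if y = x then t else t.subst x p)
def Dfs.subst (x : ℕ) (p : Path) : Dfs → Dfs
  | .fldP a q => .fldP a (Path.subst x p q)
  | .fldV a v => .fldV a (v.subst x p)
  | .typ A T => .typ A (T.subst x p)
  | .and d e => .and (d.subst x p) (e.subst x p)
end

/-- Replacing the path prefix `p` by `q` in a path. -/
def Path.repl (p q : Path) : Path → Path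
  | .var y => if Path.var y = p then q else .var y
  | .sel r a => if Path.sel r a = p then q else .sel (Path.repl p q r) a

/-- Replacing the path prefix `p` by `q` everywhere in a type. -/
def Ty.repl (p q : Path) : Ty → Ty
  | .top => .top
  | .bot => .bot
  | .fld a T => .fld a (T.repl p q)
  | .typ A S T => .typ A (S.repl p q) (T.repl p q)
  | .and S T => .and (S.repl p q) (T.repl p q)
  | .mu y T => .mu y (T.repl p q)
  | .all y S T => .all y (S.repl p q) (T.repl p q)
  | .psel r A => .psel (Path.repl p q r) A
  | .sngl r => .sngl (Path.repl p q r)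

/-- Free variables of a path. -/
def Path.fv : Path → Finset ℕ
  | .var x => {x}
  | .sel p _ => p.fv

/-- Free variables of a type. -/
def Ty.fv : Ty → Finset ℕ
  | .top => ∅
  | .bot => ∅
  | .fld _ T => T.fv
  | .typ _ S T => S.fv ∪ T.fv
  | .and S T => S.fv ∪ T.fv
  | .mu x T => T.fv.erase x
  | .all x S T => S.fv ∪ T.fv.erase x
  | .psel p _ => p.fv
  | .sngl p => p.fv

/-- The paths occurring in a type. -/
def Ty.paths : Ty → List Path
  | .top => []
  | .bot => []
  | .fld _ T => T.paths
  | .typ _ S T => S.paths ++ T.paths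
  | .and S T => S.paths ++ T.paths
  | .mu _ T => T.paths
  | .all _ S T => S.paths ++ T.paths
  | .psel p _ => [p]
  | .sngl p => [p]

/-- Labels (term members and type members) bound by a definition. -/
def Dfs.dom : Dfs → Finset (ℕ ⊕ ℕ)
  | .fldP a _ => {Sum.inl a}
  | .fldV a _ => {Sum.inl a}
  | .typ A _ => {Sum.inr A}
  | .and d e => d.dom ∪ e.dom

/-- Tight bounds: all type members occurring in the type have equal bounds. -/
def Ty.tight : Ty → Prop
  | .typ _ S T => S = T
  | .mu _ T => T.tight
  | .fld _ T => T.tight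
  | .and S T => S.tight ∧ T.tight
  | _ => True

/-- Association-list lookup. -/
def assocFind {α : Type} : List (ℕ × α) → ℕ → Option α
  | [], _ => none
  | (y, v) :: l, x => if x = y then some v else assocFind l x

/-- Typing environments. -/
abbrev Env : Type := List (ℕ × Ty)

/-- Unique membership with label set: `UniqMemL T U L` extracts the component
`U` from the intersection type `T`, where `L` records the labels seen so far,
which must be pairwise distinct. -/
inductive UniqMemL : Ty → Ty → Finset (ℕ ⊕ ℕ) → Prop
  | typ : UniqMemL (.typ A S T) (.typ A S T) {Sum.inr A}
  | fld : UniqMemL (.fld a T) (.fld a T) {Sum.inl a}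
  | mu : UniqMemL (.mu x T) (.mu x T) ∅
  | andL : UniqMemL U₁ T₁ L₁ → UniqMemL U₂ T₂ L₂ → L₁ ∩ L₂ = ∅ →
      UniqMemL (.and U₁ U₂) T₁ (L₁ ∪ L₂)
  | andR : UniqMemL U₁ T₁ L₁ → UniqMemL U₂ T₂ L₂ → L₁ ∩ L₂ = ∅ →
      UniqMemL (.and U₁ U₂) T₂ (L₁ ∪ L₂)

/-- Unique membership `T ↘ U`. -/
def UniqMem (T U : Ty) : Prop := ∃ L, UniqMemL T U L

mutual
/-- cDOT term typing `Γ ⊢ t : T`. -/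
inductive HasTy : Env → Trm → Ty → Prop
  | var : assocFind Γ x = some T → HasTy Γ (.path (.var x)) T
  | allI : HasTy ((x, T) :: Γ) t U → x ∉ T.fv →
      HasTy Γ (.val (.lam x T t)) (.all x T U)
  | allE : HasTy Γ (.path p) (.all z S T) → HasTy Γ (.path q) S →
      HasTy Γ (.app p q) (T.subst z q)
  | objI : DefTy ((x, T) :: Γ) (.var x) d T →
      HasTy ((x, T) :: Γ) (.path (.var x)) (.psel q A) →
      HasTy Γ (.val (.obj q A x T d)) (.mu x T)
  | fldE : HasTy Γ (.path p) (.fld a T) → HasTy Γ (.path (.sel p a)) T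
  | fldI : HasTy Γ (.path (.sel p a)) T → HasTy Γ (.path p) (.fld a T)
  | lett : HasTy Γ t T → HasTy ((x, T) :: Γ) u U → x ∉ U.fv →
      HasTy Γ (.lett x t u) U
  | cas : HasTy Γ (.path p) S → HasTy Γ (.path q) S' →
      HasTy ((y, Ty.and (.sngl p) (.psel q A)) :: Γ) t₁ U →
      HasTy Γ t₂ U → y ∉ U.fv →
      HasTy Γ (.cas p q A y t₁ t₂) U
  | snglTrans : HasTy Γ (.path p) (.sngl q) → HasTy Γ (.path q) T →
      HasTy Γ (.path p) T
  | snglSelf : HasTy Γ (.path p) T → HasTy Γ (.path p) (.sngl p)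
  | snglE : HasTy Γ (.path p) (.sngl q) → HasTy Γ (.path (.sel q a)) T →
      HasTy Γ (.path (.sel p a)) (.sngl (.sel q a))
  | recI : HasTy Γ (.path p) (T.subst x p) → HasTy Γ (.path p) (.mu x T)
  | recE : HasTy Γ (.path p) (.mu x T) → HasTy Γ (.path p) (T.subst x p)
  | andI : HasTy Γ (.path p) T → HasTy Γ (.path p) U →
      HasTy Γ (.path p) (.and T U)
  | sub : HasTy Γ t T → Sub Γ T U → HasTy Γ t U

/-- cDOT definition typing (with the path prefix recording the identity of the
object being typed). -/
inductive DefTy : Env → Path → Dfs → Ty → Prop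
  | typ : DefTy Γ p (.typ A T) (.typ A T T)
  | allD : HasTy Γ (.val (.lam x T t)) (.all x U V) →
      DefTy Γ p (.fldV a (.lam x T t)) (.fld a (.all x U V))
  | newD : DefTy Γ (.sel p a) (d.subst y (.sel p a)) (T.subst y (.sel p a)) →
      HasTy Γ (.path (.sel p a)) (Ty.psel (Path.subst y (.sel p a) q) A) →
      T.tight →
      DefTy Γ p (.fldV a (.obj q A y T d)) (.fld a (.mu y T))
  | pathD : HasTy Γ (.path q) U → DefTy Γ p (.fldP a q) (.fld a (.sngl q))
  | andD : DefTy Γ p d₁ T₁ → DefTy Γ p d₂ T₂ → d₁.dom ∩ d₂.dom = ∅ →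
      DefTy Γ p (.and d₁ d₂) (.and T₁ T₂)

/-- cDOT subtyping `Γ ⊢ S <: T`, including the subtyping inversion rules. -/
inductive Sub : Env → Ty → Ty → Prop
  | top : Sub Γ T .top
  | bot : Sub Γ .bot T
  | refl : Sub Γ T T
  | trans : Sub Γ S T → Sub Γ T U → Sub Γ S U
  | and1 : Sub Γ (.and T U) T
  | and2 : Sub Γ (.and T U) U
  | andI : Sub Γ S T → Sub Γ S U → Sub Γ S (.and T U)
  | fld : Sub Γ T U → Sub Γ (.fld a T) (.fld a U)
  | fldInv : UniqMem U (.fld a T₁) → Sub Γ U (.fld a T₂) → Sub Γ T₁ T₂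
  | typ : Sub Γ S₂ S₁ → Sub Γ T₁ T₂ → Sub Γ (.typ A S₁ T₁) (.typ A S₂ T₂)
  | typInv1 : UniqMem U (.typ A S₁ T₁) → Sub Γ U (.typ A S₂ T₂) → Sub Γ S₂ S₁
  | typInv2 : UniqMem U (.typ A S₁ T₁) → Sub Γ U (.typ A S₂ T₂) → Sub Γ T₁ T₂
  | selLo : HasTy Γ (.path p) (.typ A S T) → Sub Γ S (.psel p A)
  | selHi : HasTy Γ (.path p) (.typ A S T) → Sub Γ (.psel p A) T
  | snglPQ : HasTy Γ (.path p) (.sngl q) → HasTy Γ (.path q) U →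
      Sub Γ T (T.repl p q)
  | snglQP : HasTy Γ (.path p) (.sngl q) → HasTy Γ (.path q) U →
      Sub Γ T (T.repl q p)
  | allST : Sub Γ S₂ S₁ → Sub ((x, S₂) :: Γ) T₁ T₂ →
      Sub Γ (.all x S₁ T₁) (.all x S₂ T₂)
end

/-- Mutual subtyping `Γ ⊢ A =:= B`. -/
def TyEq (Γ : Env) (A B : Ty) : Prop := Sub Γ A B ∧ Sub Γ B A
end CDOT
namespace GADT

/-- Types of the (modified) λ₂,Gμ GADT calculus of Xi et al. -/
inductive GTy : Type
  | tvar : ℕ → GTy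
  | unit : GTy
  | prod : GTy → GTy → GTy
  | arr : GTy → GTy → GTy
  | data : ℕ → List GTy → GTy      -- applied GADT (τ⃗)T
  | all : ℕ → GTy → GTy            -- ∀α.τ

mutual
/-- Free type variables. -/
def GTy.fv : GTy → Finset ℕ
  | .tvar a => {a}
  | .unit => ∅
  | .prod s t => s.fv ∪ t.fv
  | .arr s t => s.fv ∪ t.fv
  | .data _ ts => GTy.fvL ts
  | .all a t => t.fv.erase a
def GTy.fvL : List GTy → Finset ℕ
  | [] => ∅
  | t :: ts => t.fv ∪ GTy.fvL ts
end

mutual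
/-- Type substitution `τ[α ↦ σ]`. -/
def gsubst (α : ℕ) (σ : GTy) : GTy → GTy
  | .tvar b => if b = α then σ else .tvar b
  | .unit => .unit
  | .prod s t => .prod (gsubst α σ s) (gsubst α σ t)
  | .arr s t => .arr (gsubst α σ s) (gsubst α σ t)
  | .data T ts => .data T (gsubstL α σ ts)
  | .all b t => if b = α then .all b t else .all b (gsubst α σ t)
def gsubstL (α : ℕ) (σ : GTy) : List GTy → List GTy
  | [] => []
  | t :: ts => gsubst α σ t :: gsubstL α σ ts
end

/-- Simultaneous substitution of a list of type variables. -/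
def gsubstMany : List ℕ → List GTy → GTy → GTy
  | [], _, τ => τ
  | _, [], τ => τ
  | a :: as, s :: ss, τ => gsubstMany as ss (gsubst a s τ)

/-- Terms of the modified λ₂,Gμ (with type annotations on tuples, and matches
annotated with the matched GADT and the returned type). A match branch
`(c, β⃗, x, e)` matches the constructor `c`, binding the type variables `β⃗`
and the payload variable `x`. -/
inductive GTrm : Type
  | var : ℕ → GTrm
  | unit : GTrm
  | pair : GTrm → GTy → GTrm → GTy → GTrm
  | fst : GTrm → GTrm
  | snd : GTrm → GTrm
  | lam : ℕ → GTy → GTrm → GTrm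
  | app : GTrm → GTrm → GTrm
  | tlam : ℕ → GTrm → GTrm
  | tapp : GTrm → GTy → GTrm
  | fix : ℕ → GTy → GTrm → GTrm
  | lett : ℕ → GTrm → GTrm → GTrm
  | cons : ℕ → List GTy → GTrm → GTrm
  | gmatch : GTrm → ℕ → GTy → List (ℕ × List ℕ × ℕ × GTrm) → GTrm

mutual
/-- Term substitution `e[x ↦ s]`. -/
def GTrm.subst (x : ℕ) (s : GTrm) : GTrm → GTrm
  | .var y => if y = x then s else .var y
  | .unit => .unit
  | .pair e₁ τ₁ e₂ τ₂ => .pair (GTrm.subst x s e₁) τ₁ (GTrm.subst x s e₂) τ₂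
  | .fst e => .fst (GTrm.subst x s e)
  | .snd e => .snd (GTrm.subst x s e)
  | .lam y τ e => .lam y τ (if y = x then e else GTrm.subst x s e)
  | .app e₁ e₂ => .app (GTrm.subst x s e₁) (GTrm.subst x s e₂)
  | .tlam a e => .tlam a (GTrm.subst x s e)
  | .tapp e τ => .tapp (GTrm.subst x s e) τ
  | .fix f τ e => .fix f τ (if f = x then e else GTrm.subst x s e)
  | .lett y e₁ e₂ => .lett y (GTrm.subst x s e₁) (if y = x then e₂ else GTrm.subst x s e₂)
  | .cons c τs e => .cons c τs (GTrm.subst x s e)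
  | .gmatch e T τ bs => .gmatch (GTrm.subst x s e) T τ (GTrm.substBs x s bs)
def GTrm.substBs (x : ℕ) (s : GTrm) :
    List (ℕ × List ℕ × ℕ × GTrm) → List (ℕ × List ℕ × ℕ × GTrm)
  | [] => []
  | (c, βs, y, e) :: rest =>
      (c, βs, y, if y = x then e else GTrm.subst x s e) :: GTrm.substBs x s rest
end

mutual
/-- Type-in-term substitution `e[α ↦ σ]`. -/
def GTrm.tsubst (α : ℕ) (σ : GTy) : GTrm → GTrm
  | .var y => .var y
  | .unit => .unit
  | .pair e₁ τ₁ e₂ τ₂ =>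
      .pair (e₁.tsubst α σ) (gsubst α σ τ₁) (e₂.tsubst α σ) (gsubst α σ τ₂)
  | .fst e => .fst (e.tsubst α σ)
  | .snd e => .snd (e.tsubst α σ)
  | .lam y τ e => .lam y (gsubst α σ τ) (e.tsubst α σ)
  | .app e₁ e₂ => .app (e₁.tsubst α σ) (e₂.tsubst α σ)
  | .tlam a e => .tlam a (if a = α then e else e.tsubst α σ)
  | .tapp e τ => .tapp (e.tsubst α σ) (gsubst α σ τ)
  | .fix f τ e => .fix f (gsubst α σ τ) (e.tsubst α σ)
  | .lett y e₁ e₂ => .lett y (e₁.tsubst α σ) (e₂.tsubst α σ)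
  | .cons c τs e => .cons c (gsubstL α σ τs) (e.tsubst α σ)
  | .gmatch e T τ bs => .gmatch (e.tsubst α σ) T (gsubst α σ τ) (GTrm.tsubstBs α σ bs)
def GTrm.tsubstBs (α : ℕ) (σ : GTy) :
    List (ℕ × List ℕ × ℕ × GTrm) → List (ℕ × List ℕ × ℕ × GTrm)
  | [] => []
  | (c, βs, y, e) :: rest =>
      (c, βs, y, if α ∈ βs then e else e.tsubst α σ) :: GTrm.tsubstBs α σ rest
end

/-- Simultaneous type-in-term substitution. -/
def tsubstMany : List ℕ → List GTy → GTrm → GTrm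
  | [], _, e => e
  | _, [], e => e
  | a :: as, s :: ss, e => tsubstMany as ss (e.tsubst a s)

/-- A GADT signature: the list of constructors of each GADT, and the signature
`∀β⃗. τ → (σ⃗)T` of each constructor `c`, recorded as `(β⃗, τ, σ⃗, T)`. -/
structure GSig : Type where
  ctorsOf : ℕ → List ℕ
  sig : ℕ → Option (List ℕ × GTy × List GTy × ℕ)

/-- Items of a constraint Δ: type variables and type equations. -/
inductive CItem : Type
  | tv : ℕ → CItem
  | eq : GTy → GTy → CItem

abbrev GCtx : Type := List CItem

/-- Substitution on constraint items. -/
def CItem.subst (α : ℕ) (σ : GTy) : CItem → CItem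
  | .tv b => .tv b
  | .eq t u => .eq (gsubst α σ t) (gsubst α σ u)

/-- Turning two lists of types into a list of equations. -/
def zipEq (as bs : List GTy) : GCtx := (as.zip bs).map fun p => CItem.eq p.1 p.2

/-- The modified syntactic constraint-reasoning relation `Δ ⊢′ τ₁ ≡ τ₂`:
no ex-falso rules, and no inversion of arrow or universal types, but
inversion of applied-GADT and tuple equations is allowed. -/
inductive Ent : GCtx → GTy → GTy → Prop
  | refl : Ent Δ τ τ
  | triv : Ent (List.map CItem.tv tvs ++ Δ) τ₁ τ₂ →
      Ent (List.map CItem.tv tvs ++ CItem.eq (.tvar a) (.tvar a) :: Δ) τ₁ τ₂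
  | solveL : a ∉ GTy.fv τ →
      Ent (List.map CItem.tv tvs ++ Δ.map (CItem.subst a τ))
        (gsubst a τ τ₁) (gsubst a τ τ₂) →
      Ent (List.map CItem.tv tvs ++ CItem.eq τ (.tvar a) :: Δ) τ₁ τ₂
  | solveR : a ∉ GTy.fv τ →
      Ent (List.map CItem.tv tvs ++ Δ.map (CItem.subst a τ))
        (gsubst a τ τ₁) (gsubst a τ τ₂) →
      Ent (List.map CItem.tv tvs ++ CItem.eq (.tvar a) τ :: Δ) τ₁ τ₂
  | invData : as.length = bs.length →
      Ent (List.map CItem.tv tvs ++ zipEq as bs ++ Δ) τ₁ τ₂ →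
      Ent (List.map CItem.tv tvs ++ CItem.eq (.data T as) (.data T bs) :: Δ) τ₁ τ₂
  | invProd : Ent (List.map CItem.tv tvs ++ CItem.eq a₁ b₁ :: CItem.eq a₂ b₂ :: Δ) τ₁ τ₂ →
      Ent (List.map CItem.tv tvs ++ CItem.eq (.prod a₁ a₂) (.prod b₁ b₂) :: Δ) τ₁ τ₂

/-- `Δ ⊢ τ : *`: all free type variables of τ are declared in Δ. -/
def GWf (Δ : GCtx) (τ : GTy) : Prop := ∀ a ∈ GTy.fv τ, CItem.tv a ∈ Δ

/-- Typing `Δ; Pc ⊢ e : τ` for the modified λ₂,Gμ. -/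
inductive GHasTy (Sg : GSig) : GCtx → List (ℕ × GTy) → GTrm → GTy → Prop
  | var : CDOT.assocFind Pc x = some τ → GHasTy Sg Δ Pc (.var x) τ
  | unit : GHasTy Sg Δ Pc .unit .unit
  | pair : GHasTy Sg Δ Pc e₁ τ₁ → GHasTy Sg Δ Pc e₂ τ₂ →
      GHasTy Sg Δ Pc (.pair e₁ τ₁ e₂ τ₂) (.prod τ₁ τ₂)
  | fst : GHasTy Sg Δ Pc e (.prod τ₁ τ₂) → GHasTy Sg Δ Pc (.fst e) τ₁
  | snd : GHasTy Sg Δ Pc e (.prod τ₁ τ₂) → GHasTy Sg Δ Pc (.snd e) τ₂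
  | lam : GHasTy Sg Δ ((x, τ₁) :: Pc) e τ₂ →
      GHasTy Sg Δ Pc (.lam x τ₁ e) (.arr τ₁ τ₂)
  | app : GHasTy Sg Δ Pc e₁ (.arr τ₁ τ₂) → GHasTy Sg Δ Pc e₂ τ₁ →
      GHasTy Sg Δ Pc (.app e₁ e₂) τ₂
  | tlam : GHasTy Sg (CItem.tv a :: Δ) Pc e τ →
      GHasTy Sg Δ Pc (.tlam a e) (.all a τ)
  | tapp : GHasTy Sg Δ Pc e (.all a τ) → GWf Δ σ →
      GHasTy Sg Δ Pc (.tapp e σ) (gsubst a σ τ)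
  | fix : GHasTy Sg Δ ((f, τ) :: Pc) e τ → GHasTy Sg Δ Pc (.fix f τ e) τ
  | lett : GHasTy Sg Δ Pc e₁ τ₁ → GHasTy Sg Δ ((x, τ₁) :: Pc) e₂ τ₂ →
      GHasTy Sg Δ Pc (.lett x e₁ e₂) τ₂
  | eq : GHasTy Sg Δ Pc e τ₁ → Ent Δ τ₁ τ₂ → GHasTy Sg Δ Pc e τ₂
  | cons : Sg.sig c = some (βs, τA, σs, T) → βs.length = τs.length →
      GHasTy Sg Δ Pc e (gsubstMany βs τs τA) →
      GHasTy Sg Δ Pc (.cons c τs e) (.data T (σs.map (gsubstMany βs τs)))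
  | gmatch : GHasTy Sg Δ Pc e (.data T δs) →
      bs.map (fun b => b.1) = Sg.ctorsOf T →
      (∀ c βs x body, (c, βs, x, body) ∈ bs →
        ∃ τA σs, Sg.sig c = some (βs, τA, σs, T) ∧ σs.length = δs.length) →
      (∀ c βs x body τA σs, (c, βs, x, body) ∈ bs →
        Sg.sig c = some (βs, τA, σs, T) →
        GHasTy Sg (βs.map CItem.tv ++ zipEq σs δs ++ Δ)
          ((x, τA) :: Pc) body τret) →
      GHasTy Sg Δ Pc (.gmatch e T τret bs) τret

/-- Values of λ₂,Gμ. -/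
inductive GVal : GTrm → Prop
  | unit : GVal .unit
  | pair : GVal v₁ → GVal v₂ → GVal (.pair v₁ τ₁ v₂ τ₂)
  | lam : GVal (.lam x τ e)
  | tlam : GVal (.tlam a e)
  | cons : GVal v → GVal (.cons c τs v)

/-- The deterministic small-step reduction of the modified λ₂,Gμ. -/
inductive GRed : GTrm → GTrm → Prop
  | pairL : GRed e₁ e₁' → GRed (.pair e₁ τ₁ e₂ τ₂) (.pair e₁' τ₁ e₂ τ₂)
  | pairR : GVal v₁ → GRed e₂ e₂' → GRed (.pair v₁ τ₁ e₂ τ₂) (.pair v₁ τ₁ e₂' τ₂)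
  | fstC : GRed e e' → GRed (.fst e) (.fst e')
  | fstV : GVal v₁ → GVal v₂ → GRed (.fst (.pair v₁ τ₁ v₂ τ₂)) v₁
  | sndC : GRed e e' → GRed (.snd e) (.snd e')
  | sndV : GVal v₁ → GVal v₂ → GRed (.snd (.pair v₁ τ₁ v₂ τ₂)) v₂
  | appL : GRed e₁ e₁' → GRed (.app e₁ e₂) (.app e₁' e₂)
  | appR : GVal v₁ → GRed e₂ e₂' → GRed (.app v₁ e₂) (.app v₁ e₂')
  | beta : GVal v → GRed (.app (.lam x τ e) v) (GTrm.subst x v e)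
  | tappC : GRed e e' → GRed (.tapp e σ) (.tapp e' σ)
  | tbeta : GRed (.tapp (.tlam a e) σ) (e.tsubst a σ)
  | fix : GRed (.fix f τ e) (GTrm.subst f (.fix f τ e) e)
  | letC : GRed e₁ e₁' → GRed (.lett x e₁ e₂) (.lett x e₁' e₂)
  | letV : GVal v → GRed (.lett x v e) (GTrm.subst x v e)
  | consC : GRed e e' → GRed (.cons c τs e) (.cons c τs e')
  | matchC : GRed e e' → GRed (.gmatch e T τ bs) (.gmatch e' T τ bs)
  | matchV : GVal v → (c, βs, x, body) ∈ bs →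
      GRed (.gmatch (.cons c τs v) T τ bs)
        (GTrm.subst x v (tsubstMany βs τs body))

end GADT
namespace GADT
open CDOT

/-! ## Encoding λ₂,Gμ into cDOT

Fixed names used by the encoding: `lib` is variable 0 and `env` is variable 1.
On `lib`: type members `Any = 0`, `Unit = 1`, `Tuple = 2`; fields
`unit = 0`, `tuple = 1`.  On tuple objects: type members `T₁ = 0`, `T₂ = 1`;
fields `fst = 0`, `snd = 1`.  On first-class type-argument objects the type
member `T` is `0`; on result-type objects the member `R` is `0`.  On `env`,
the type member encoding a GADT `T` is `2*T` and the one encoding a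
constructor type `T_c` is `2*c+1`, while the constructor function `c` is the
field `c`.  On encoded GADT objects, the type member `Aₖ` is `2*k`, the
existential member `B_{i,j}` is `2*j+1`, and the fields are `data = 0` and
`pmatch = 1`. -/

def libV : Path := .var 0
def envV : Path := .var 1
def AnyN : ℕ := 0
def UnitN : ℕ := 1
def TupleN : ℕ := 2
def unitN : ℕ := 0
def tupleN : ℕ := 1
def T1N : ℕ := 0
def T2N : ℕ := 1
def fstN : ℕ := 0
def sndN : ℕ := 1
def TArgN : ℕ := 0
def RN : ℕ := 0
def dataN : ℕ := 0
def pmatchN : ℕ := 1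

/-- A type member with equal bounds `{A = T}`. -/
def tmem (A : ℕ) (T : Ty) : Ty := .typ A T T

mutual
/-- The type translation `𝒯(τ, Θ)`, where `Θ` maps λ₂,Gμ type variables to
cDOT types and `n` is a supply of fresh cDOT variables. -/
def TrTy (Θ : ℕ → Ty) (n : ℕ) : GTy → Ty
  | .tvar a => Θ a
  | .unit => .psel libV UnitN
  | .prod s t =>
      (Ty.psel libV TupleN).and
        ((tmem T1N (TrTy Θ (n+1) s)).and (tmem T2N (TrTy Θ (n+1) t)))
  | .arr s t => .all n (TrTy Θ (n+1) s) (TrTy Θ (n+1) t)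
  | .data T ts => (Ty.psel envV (2*T)).and (TrArgs Θ (n+1) 0 ts)
  | .all a t =>
      .all n (Ty.typ TArgN .bot .top)
        (TrTy (Function.update Θ a (.psel (.var n) TArgN)) (n+1) t)
/-- Translation of a list of GADT type arguments into an intersection of
equal-bound type-member refinements `{A₁ = 𝒯(τ₁,Θ)} ∧ …`. -/
def TrArgs (Θ : ℕ → Ty) (n : ℕ) (k : ℕ) : List GTy → Ty
  | [] => .top
  | t :: ts => (tmem (2*k) (TrTy Θ n t)).and (TrArgs Θ n (k+1) ts)
end

/-- The recursive tuple record type `μ(s: {T₁:⊥..⊤} ∧ {T₂:⊥..⊤} ∧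
{fst: s.T₁} ∧ {snd: s.T₂})`. -/
def TupleDef : Ty :=
  .mu 2 ((Ty.typ T1N .bot .top).and ((Ty.typ T2N .bot .top).and
    ((Ty.fld fstN (.psel (.var 2) T1N)).and
     (Ty.fld sndN (.psel (.var 2) T2N)))))

/-- The type of the tuple constructor `lib.tuple`. -/
def TupleCtorTy : Ty :=
  .all 3 ((Ty.typ T1N .bot .top).and (Ty.typ T2N .bot .top))
    (.all 4 (.psel (.var 3) T1N)
      (.all 5 (.psel (.var 3) T2N)
        ((Ty.psel libV TupleN).and
          ((tmem T1N (.psel (.var 3) T1N)).and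
           (tmem T2N (.psel (.var 3) T2N))))))

/-- The ascribed type of `lib`, providing the builtin unit and tuple types. -/
def LibTy : Ty :=
  (Ty.typ AnyN .bot .top).and (
    (tmem UnitN (Ty.typ 0 .bot .top)).and (
      (Ty.fld unitN (.psel libV UnitN)).and (
        (tmem TupleN TupleDef).and (Ty.fld tupleN TupleCtorTy))))

/-- `bindTArgs Θ ts βs j` maps each `β_j` to the type member `ts.B_j`
(`B_j = 2*j+1`), leaving `Θ` unchanged elsewhere. -/
def bindTArgs (Θ : ℕ → Ty) (ts : Path) : List ℕ → ℕ → (ℕ → Ty)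
  | [], _ => Θ
  | β :: βs, j => Function.update (bindTArgs Θ ts βs (j+1)) β (.psel ts (2*j+1))

/-- The record type `{B₁ : ⊥..⊤} ∧ …` of a first-class list of existential
type arguments. -/
def BRec : List ℕ → ℕ → Ty
  | [], _ => .top
  | _ :: βs, j => (Ty.typ (2*j+1) .bot .top).and (BRec βs (j+1))

/-- Signature encoding (`𝒮(Σ)`): `Γ` contains the `lib` binding with the
builtin types, and for every constructor `cᵢ` with signature
`∀β⃗. τ_A → (σ⃗)T` the field `env.cᵢ` has type
`∀(ts: {B₁:⊥..⊤; …}) ∀(v: 𝒯(τ_A, θ)) 𝒯((σ⃗)T, θ)` where `θ = [βⱼ ↦ ts.Bⱼ]`. -/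
def SigEnc (Sg : GSig) (Γ : Env) (n : ℕ) : Prop :=
  HasTy Γ (.path libV) LibTy ∧
  ∀ c βs τA σs T, Sg.sig c = some (βs, τA, σs, T) →
    HasTy Γ (.path (.sel envV c))
      (.all n (BRec βs 0)
        (.all (n+1) (TrTy (bindTArgs (fun _ => .top) (.var n) βs 0) (n+2) τA)
          ((Ty.psel envV (2*T)).and
            (TrArgs (bindTArgs (fun _ => .top) (.var n) βs 0) (n+2) 0 σs))))

/-- Equational correspondence `Ψ(Δ; Θ; Γ)`: each type variable of `Δ` maps
through `Θ` to a declared bounded type member, each equation of `Δ` holds as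
mutual subtyping of the translated types, and `Γ` contains the `lib` and `env`
bindings encoding the primitives and the GADT signature. -/
def EqCorr (Sg : GSig) (Δ : GCtx) (Θ : ℕ → Ty) (Γ : Env) (n : ℕ) : Prop :=
  (∀ a, CItem.tv a ∈ Δ →
    ∃ p A, Θ a = Ty.psel p A ∧ HasTy Γ (.path p) (.typ A .bot .top)) ∧
  (∀ τ₁ τ₂, CItem.eq τ₁ τ₂ ∈ Δ →
    TyEq Γ (TrTy Θ n τ₁) (TrTy Θ n τ₂)) ∧
  SigEnc Sg Γ n

end GADT

namespace GADT
open CDOT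

/-- **Inversion of translated tuple-type equality**: if
`Γ ⊢ lib.Tuple =:= TupleDef` and
`Γ ⊢ lib.Tuple ∧ {T₁ = S₁} ∧ {T₂ = S₂} =:= lib.Tuple ∧ {T₁ = U₁} ∧ {T₂ = U₂}`,
then `Γ ⊢ S₁ =:= U₁` and `Γ ⊢ S₂ =:= U₂`. -/
theorem tuple_eq_inversion (Γ : Env) (S₁ S₂ U₁ U₂ : Ty)
    (hlib : TyEq Γ (.psel libV TupleN) TupleDef)
    (h : TyEq Γ
      ((Ty.psel libV TupleN).and ((tmem T1N S₁).and (tmem T2N S₂)))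
      ((Ty.psel libV TupleN).and ((tmem T1N U₁).and (tmem T2N U₂)))) :
    TyEq Γ S₁ U₁ ∧ TyEq Γ S₂ U₂ := by
  -- W : the LHS with lib.Tuple replaced by TupleDef
  set W : Ty := TupleDef.and ((tmem T1N S₁).and (tmem T2N S₂)) with hW
  -- W <: LHS of h
  have hWL : Sub Γ W ((Ty.psel libV TupleN).and ((tmem T1N S₁).and (tmem T2N S₂))) :=
    Sub.andI (Sub.trans Sub.and1 hlib.2) Sub.and2
  have hWR : Sub Γ W ((Ty.psel libV TupleN).and ((tmem T1N U₁).and (tmem T2N U₂))) :=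
    Sub.trans hWL h.1
  -- unique membership facts
  have hdisj : ({Sum.inr T1N} : Finset (ℕ ⊕ ℕ)) ∩ {Sum.inr T2N} = ∅ := by decide
  have hum1 : UniqMem W (Ty.typ T1N S₁ S₁) := by
    refine ⟨∅ ∪ ({Sum.inr T1N} ∪ {Sum.inr T2N}), ?_⟩
    exact UniqMemL.andR UniqMemL.mu
      (UniqMemL.andL UniqMemL.typ UniqMemL.typ hdisj) (by simp)
  have hum2 : UniqMem W (Ty.typ T2N S₂ S₂) := by
    refine ⟨∅ ∪ ({Sum.inr T1N} ∪ {Sum.inr T2N}), ?_⟩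
    exact UniqMemL.andR UniqMemL.mu
      (UniqMemL.andR UniqMemL.typ UniqMemL.typ hdisj) (by simp)
  -- W <: {T₁ = U₁} and W <: {T₂ = U₂}
  have h1 : Sub Γ W (Ty.typ T1N U₁ U₁) :=
    Sub.trans hWR (Sub.trans Sub.and2 Sub.and1)
  have h2 : Sub Γ W (Ty.typ T2N U₂ U₂) :=
    Sub.trans hWR (Sub.trans Sub.and2 Sub.and2)
  exact ⟨⟨Sub.typInv2 hum1 h1, Sub.typInv1 hum1 h1⟩,
         ⟨Sub.typInv2 hum2 h2, Sub.typInv1 hum2 h2⟩⟩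

end GADT
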